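/- arXiv:2311.01552 — 2 statements merged into one kernel-verified Lean document; each statement's English description precedes it below -/
import Mathlib

section
/- There exists an absolute constant C > 0 such that for every integer N ≥ 1: (i) for every point s ∈ S_N(1,2), there exists a point h in the convex hull of the four points (0,0), (1,1), (1/4,0), (0,1/2) in ℝ² with ‖s − h‖_∞ ≤ C/N; and (ii) for every point h in the convex hull of (0,0), (1,1), (1/4,0), (0,1/2), there exists s ∈ S_N(1,2) with ‖s − h‖_∞ ≤ C/N. -/
/-- `r_A(x)`: number of ordered pairs `(a,b) ∈ A × A` with `a - b = x`. -/
def rZ (A : Finset ℤ) (x : ℤ) : ℕ :=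
  ((A ×ˢ A).filter (fun p => p.1 - p.2 = x)).card

/-- `S_N(x_1,…,x_d)`: normalized difference-convolution vectors of subsets of `{1,…,N}`. -/
def SN (N d : ℕ) (x : Fin d → ℤ) : Set (Fin d → ℝ) :=
  { v | ∃ A : Finset ℤ, A ⊆ Finset.Icc 1 (N : ℤ) ∧ ∀ j, v j = (rZ A (x j) : ℝ) / N }

/-!
Write `u = r_A(1)` and `v = r_A(2)` and read the membership of `b, b+1, b+2, b+3` in `A` as four
bits. For suitable potentials `Φ` on three consecutive bits, the local quantities
`4 [b, b+1 ∈ A] - 3 [b, b+2 ∈ A]` and `2 [b, b+2 ∈ A] - [b, b+1 ∈ A]` are bounded by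
`1 + Φ(next window) - Φ(window)`; summing over `b` telescopes to `4u - 3v ≤ N + 3` and
`2v - u ≤ N + 1`. Hence `(u, v) / (N + 3)` lies in the quadrilateral
`{x, y ≥ 0, 4x - 3y ≤ 1, 2y - x ≤ 1}`, which is the convex hull of the four points.

Conversely, the vertices `(1, 1)`, `(1/4, 0)`, `(0, 1/2)` are realised by an interval, by the
pairs `{4k, 4k+1}` and by the even numbers. Blocks of these three shapes of lengths `αN`, `βN`, `γN`
with `α + β + γ ≤ 1`, separated by gaps of two, have no difference `1` or `2` between blocks, so
their counts add up to `N (α + β/4, α + γ/2) + O(1)`.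
-/

open Finset

theorem rZ_eq_card_filter (A : Finset ℤ) (x : ℤ) : rZ A x = #(A.filter (· + x ∈ A)) := by
  refine card_nbij' Prod.snd (fun b => (b + x, b)) ?_ ?_ ?_ ?_
  · rintro ⟨a, b⟩ h
    simp only [mem_coe, mem_filter, mem_product] at h ⊢
    exact ⟨h.1.2, by rw [← h.2]; simpa using h.1.1⟩
  · intro b h
    simp only [mem_coe, mem_filter, mem_product] at h ⊢
    exact ⟨⟨h.2, h.1⟩, by ring⟩
  · rintro ⟨a, b⟩ h
    simp only [mem_coe, mem_filter, mem_product] at h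
    simp [← h.2]
  · intro b _
    rfl

theorem rZ_le_of_subset_Icc {N : ℕ} {A : Finset ℤ} (hA : A ⊆ Icc 1 (N : ℤ)) (x : ℤ) :
    rZ A x ≤ N :=
  calc rZ A x ≤ #A := (rZ_eq_card_filter A x).trans_le (card_filter_le _ _)
    _ ≤ N := (card_le_card hA).trans (by simp)

theorem rZ_eq_zero_of_forall_notMem {A : Finset ℤ} {x : ℤ} (h : ∀ b ∈ A, b + x ∉ A) :
    rZ A x = 0 := by
  rw [rZ_eq_card_filter, card_eq_zero, filter_eq_empty_iff]
  exact h

theorem rZ_union_of_add_lt {A B : Finset ℤ} {x : ℤ} (hx : 0 < x)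
    (h : ∀ a ∈ A, ∀ b ∈ B, a + x < b) : rZ (A ∪ B) x = rZ A x + rZ B x := by
  have hAB : Disjoint A B := disjoint_left.2 fun a ha hb => by have := h a ha a hb; omega
  simp only [rZ_eq_card_filter, filter_union]
  rw [card_union_of_disjoint (disjoint_filter_filter hAB)]
  congr 2 <;> refine filter_congr fun b hb => ?_ <;> rw [mem_union]
  · exact or_iff_left fun hB => (h b hb _ hB).false
  · exact or_iff_right fun hA => by have := h _ hA b hb; omega

theorem rZ_Icc (m n : ℤ) {x : ℤ} (hx : 0 ≤ x) : rZ (Icc m n) x = (n + 1 - m - x).toNat := by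
  have : (Icc m n).filter (· + x ∈ Icc m n) = Icc m (n - x) := by
    ext b; simp only [mem_filter, mem_Icc]; omega
  rw [rZ_eq_card_filter, this, Int.card_Icc]
  congr 1; ring

theorem rZ_image_add_mul (A : Finset ℤ) (s : ℤ) {k : ℤ} (hk : k ≠ 0) (x : ℤ) :
    rZ (A.image (s + k * ·)) (k * x) = rZ A x := by
  have hinj : Function.Injective (s + k * ·) := fun b c h => by simpa [hk] using h
  rw [rZ_eq_card_filter, rZ_eq_card_filter, filter_image, card_image_of_injective _ hinj]
  congr 1
  refine filter_congr fun b _ => ?_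
  rw [show s + k * b + k * x = s + k * (b + x) by ring, hinj.mem_finset_image]

theorem rZ_eq_sum_range {N : ℕ} {A : Finset ℤ} (hA : A ⊆ Icc 1 (N : ℤ)) (x : ℕ) :
    (rZ A x : ℤ) =
      ∑ i ∈ range N, if (i + 1 : ℤ) ∈ A ∧ (((i + x : ℕ) : ℤ) + 1) ∈ A then 1 else 0 := by
  rw [sum_boole, rZ_eq_card_filter]
  congr 1
  refine card_nbij' (fun b => (b - 1).toNat) (fun i => (i + 1 : ℤ)) ?_ ?_ ?_ ?_
  · intro b hb
    simp only [mem_coe, mem_filter, mem_range] at hb ⊢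
    have := mem_Icc.1 (hA hb.1)
    refine ⟨by omega, ?_, ?_⟩
    · convert hb.1 using 1; omega
    · convert hb.2 using 1; push_cast; omega
  · intro i hi
    simp only [mem_coe, mem_filter, mem_range] at hi ⊢
    exact ⟨hi.2.1, by convert hi.2.2 using 1; push_cast; ring⟩
  · intro b hb
    have := mem_Icc.1 (hA (mem_filter.1 hb).1)
    simp only; omega
  · intro i _
    simp

theorem sum_range_le_of_potential (F Φ : ℕ → ℤ) (hF : ∀ i, F i ≤ 1 + Φ (i + 1) - Φ i) (N : ℕ) :
    ∑ i ∈ range N, F i ≤ N + Φ N - Φ 0 := by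
  calc ∑ i ∈ range N, F i ≤ ∑ i ∈ range N, (1 + (Φ (i + 1) - Φ i)) :=
        sum_le_sum fun i _ => by linarith [hF i]
    _ = N + Φ N - Φ 0 := by rw [sum_add_distrib, sum_range_sub, sum_const, card_range, nsmul_one]; ring

theorem rZ_linear_le_of_potential {N : ℕ} {A : Finset ℤ} (hA : A ⊆ Icc 1 (N : ℤ))
    (p q K : ℤ) (φ : Bool → Bool → Bool → ℤ)
    (hstep : ∀ x y z t : Bool,
      p * (if x && y then 1 else 0) + q * (if x && z then 1 else 0) ≤ 1 + φ y z t - φ x y z)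
    (hosc : ∀ x y z x' y' z' : Bool, φ x y z - φ x' y' z' ≤ K) :
    p * rZ A 1 + q * rZ A 2 ≤ N + K := by
  set f : ℕ → Bool := fun i => (i + 1 : ℤ) ∈ A
  have hsum : p * rZ A 1 + q * rZ A 2 = ∑ i ∈ range N,
      (p * (if f i && f (i + 1) then 1 else 0) + q * (if f i && f (i + 2) then 1 else 0)) := by
    have h1 := rZ_eq_sum_range hA 1
    have h2 := rZ_eq_sum_range hA 2
    simp only [Nat.cast_one, Nat.cast_ofNat] at h1 h2
    simp only [h1, h2, mul_sum, ← sum_add_distrib, f, Bool.and_eq_true, decide_eq_true_eq]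
  rw [hsum]
  calc _ ≤ N + φ (f N) (f (N + 1)) (f (N + 2)) - φ (f 0) (f 1) (f 2) :=
        sum_range_le_of_potential _ (fun i => φ (f i) (f (i + 1)) (f (i + 2)))
          (fun i => hstep _ _ _ (f (i + 3))) N
    _ ≤ N + K := by linarith [hosc (f N) (f (N + 1)) (f (N + 2)) (f 0) (f 1) (f 2)]

theorem four_mul_rZ_one_le {N : ℕ} {A : Finset ℤ} (hA : A ⊆ Icc 1 (N : ℤ)) :
    4 * (rZ A 1 : ℤ) ≤ 3 * rZ A 2 + N + 3 := by
  have := rZ_linear_le_of_potential hA 4 (-3) 3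
    (fun | false, false, true => -1 | false, true, true => -2 | true, true, _ => -3 | _, _, _ => 0)
    (by decide) (by decide)
  linarith

theorem two_mul_rZ_two_le {N : ℕ} {A : Finset ℤ} (hA : A ⊆ Icc 1 (N : ℤ)) :
    2 * (rZ A 2 : ℤ) ≤ rZ A 1 + N + 1 := by
  have := rZ_linear_le_of_potential hA (-1) 2 1
    (fun | true, false, true => -1 | _, _, _ => 0) (by decide) (by decide)
  linarith

noncomputable def pairBlock (s : ℤ) : ℕ → Finset ℤ
  | 0 => ∅
  | c + 1 => pairBlock s c ∪ Icc (s + 4 * c) (s + 4 * c + 1)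

theorem pairBlock_bounds {s y : ℤ} {c : ℕ} (hy : y ∈ pairBlock s c) :
    s ≤ y ∧ y + 3 ≤ s + 4 * c := by
  induction c with
  | zero => simp [pairBlock] at hy
  | succ c ih =>
    simp only [pairBlock, mem_union, mem_Icc] at hy
    push_cast
    rcases hy with hy | hy
    · have := ih hy; omega
    · omega

theorem rZ_pairBlock (s : ℤ) (c : ℕ) {x : ℤ} (hx : 0 < x) (hx2 : x ≤ 2) :
    rZ (pairBlock s c) x = c * (2 - x).toNat := by
  induction c with
  | zero => simp [pairBlock, rZ]
  | succ c ih =>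
    have hsep : ∀ y ∈ pairBlock s c, ∀ z ∈ Icc (s + 4 * c) (s + 4 * c + 1), y + x < z :=
      fun y hy z hz => by have := pairBlock_bounds hy; rw [mem_Icc] at hz; omega
    rw [pairBlock, rZ_union_of_add_lt hx hsep, ih, rZ_Icc _ _ hx.le,
      show s + 4 * c + 1 + 1 - (s + 4 * c) - x = 2 - x by ring]
    ring

noncomputable def evenBlock (s : ℤ) (d : ℕ) : Finset ℤ :=
  (Icc 0 ((d : ℤ) - 1)).image (s + 2 * ·)

theorem evenBlock_bounds {s y : ℤ} {d : ℕ} (hy : y ∈ evenBlock s d) :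
    s ≤ y ∧ y + 2 ≤ s + 2 * d := by
  obtain ⟨b, hb, rfl⟩ := mem_image.1 hy
  rw [mem_Icc] at hb
  omega

theorem rZ_evenBlock_one (s : ℤ) (d : ℕ) : rZ (evenBlock s d) 1 = 0 :=
  rZ_eq_zero_of_forall_notMem fun y hy hy1 => by
    obtain ⟨b, -, rfl⟩ := mem_image.1 hy
    obtain ⟨b', -, hb'⟩ := mem_image.1 hy1
    omega

theorem rZ_evenBlock_two (s : ℤ) (d : ℕ) : rZ (evenBlock s d) 2 = d - 1 := by
  have := rZ_image_add_mul (Icc 0 ((d : ℤ) - 1)) s two_ne_zero 1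
  rw [mul_one] at this
  rw [evenBlock, this, rZ_Icc _ _ zero_le_one]
  omega

noncomputable def blockSet (a c d : ℕ) : Finset ℤ :=
  Icc 1 (a : ℤ) ∪ pairBlock (a + 3) c ∪ evenBlock (a + 4 * c + 3) d

theorem blockSet_subset (a c d : ℕ) :
    blockSet a c d ⊆ Icc 1 ((a + 4 * c + 2 * d + 1 : ℕ) : ℤ) := by
  intro y hy
  simp only [blockSet, mem_union, mem_Icc] at hy ⊢
  push_cast
  rcases hy with (hy | hy) | hy
  · omega
  · have := pairBlock_bounds hy; omega
  · have := evenBlock_bounds hy; omega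

theorem rZ_blockSet (a c d : ℕ) {x : ℤ} (hx : 0 < x) (hx2 : x ≤ 2) :
    rZ (blockSet a c d) x =
      rZ (Icc 1 (a : ℤ)) x + rZ (pairBlock (a + 3) c) x + rZ (evenBlock (a + 4 * c + 3) d) x := by
  rw [blockSet, rZ_union_of_add_lt hx, rZ_union_of_add_lt hx]
  · intro y hy z hz
    have := pairBlock_bounds hz
    rw [mem_Icc] at hy
    omega
  · intro y hy z hz
    have := evenBlock_bounds hz
    rcases mem_union.1 hy with hy | hy
    · rw [mem_Icc] at hy; omega
    · have := pairBlock_bounds hy; omega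

theorem rZ_blockSet_one (a c d : ℕ) : rZ (blockSet a c d) 1 = (a - 1) + c := by
  rw [rZ_blockSet a c d one_pos one_le_two, rZ_Icc _ _ zero_le_one,
    rZ_pairBlock _ _ one_pos one_le_two, rZ_evenBlock_one]
  norm_num

theorem rZ_blockSet_two (a c d : ℕ) : rZ (blockSet a c d) 2 = (a - 2) + (d - 1) := by
  rw [rZ_blockSet a c d two_pos le_rfl, rZ_Icc _ _ zero_le_two,
    rZ_pairBlock _ _ two_pos le_rfl, rZ_evenBlock_two]
  norm_num
  omega

theorem exists_rZ_near {N : ℕ} (hN : 1 ≤ N) {α β γ : ℝ} (hα : 0 ≤ α) (hβ : 0 ≤ β) (hγ : 0 ≤ γ)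
    (hsum : α + β + γ ≤ 1) :
    ∃ A ⊆ Icc 1 (N : ℤ), |(rZ A 1 : ℝ) - (α + β / 4) * N| ≤ 6 ∧
      |(rZ A 2 : ℝ) - (α + γ / 2) * N| ≤ 6 := by
  have hM : (0 : ℝ) ≤ N - 1 := by
    have : (1 : ℝ) ≤ N := by exact_mod_cast hN
    linarith
  -- scaling by `N - 1` leaves room for the extra `1` in the length `a + 4c + 2d + 1`
  set a := ⌊α * (N - 1)⌋₊
  set c := ⌊β * (N - 1) / 4⌋₊
  set d := ⌊γ * (N - 1) / 2⌋₊
  have ha := Nat.floor_le (mul_nonneg hα hM)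
  have hc := Nat.floor_le (div_nonneg (mul_nonneg hβ hM) zero_le_four)
  have hd := Nat.floor_le (div_nonneg (mul_nonneg hγ hM) zero_le_two)
  have ha' := Nat.lt_floor_add_one (α * (N - 1))
  have hc' := Nat.lt_floor_add_one (β * (N - 1) / 4)
  have hd' := Nat.lt_floor_add_one (γ * (N - 1) / 2)
  have hlen : a + 4 * c + 2 * d + 1 ≤ N := by
    have : (a + 4 * c + 2 * d + 1 : ℝ) ≤ N := by nlinarith
    exact_mod_cast this
  have h1 : a + c ≤ rZ (blockSet a c d) 1 + 1 ∧ rZ (blockSet a c d) 1 ≤ a + c := by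
    rw [rZ_blockSet_one]; omega
  have h2 : a + d ≤ rZ (blockSet a c d) 2 + 3 ∧ rZ (blockSet a c d) 2 ≤ a + d := by
    rw [rZ_blockSet_two]; omega
  obtain ⟨h1l, h1u⟩ : (a + c : ℝ) ≤ rZ (blockSet a c d) 1 + 1 ∧
      (rZ (blockSet a c d) 1 : ℝ) ≤ a + c := by exact_mod_cast h1
  obtain ⟨h2l, h2u⟩ : (a + d : ℝ) ≤ rZ (blockSet a c d) 2 + 3 ∧
      (rZ (blockSet a c d) 2 : ℝ) ≤ a + d := by exact_mod_cast h2
  refine ⟨blockSet a c d, (blockSet_subset a c d).trans (Icc_subset_Icc_right ?_), ?_, ?_⟩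
  · exact_mod_cast hlen
  · rw [abs_le]; constructor <;> nlinarith
  · rw [abs_le]; constructor <;> nlinarith

def quadVertices : Set (Fin 2 → ℝ) := {![0, 0], ![1, 1], ![1 / 4, 0], ![0, 1 / 2]}

theorem combination_mem_convexHull {α β γ : ℝ} (hα : 0 ≤ α) (hβ : 0 ≤ β) (hγ : 0 ≤ γ)
    (hsum : α + β + γ ≤ 1) : ![α + β / 4, α + γ / 2] ∈ convexHull ℝ quadVertices := by
  have := (convex_convexHull ℝ quadVertices).sum_mem (t := univ)
    (w := ![1 - α - β - γ, α, β, γ]) (z := ![![0, 0], ![1, 1], ![1 / 4, 0], ![0, 1 / 2]])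
    (fun i _ => by fin_cases i <;> simp <;> linarith)
    (by simp only [Fin.sum_univ_four, Matrix.cons_val]; ring)
    (fun i _ => subset_convexHull ℝ _ (by fin_cases i <;> simp [quadVertices]))
  convert this using 1
  ext i
  fin_cases i <;> simp [Fin.sum_univ_four] <;> ring

theorem exists_combination_of_le {u v : ℝ} (hu : 0 ≤ u) (hv : 0 ≤ v) (h₁ : 4 * u - 3 * v ≤ 1)
    (h₂ : 2 * v - u ≤ 1) : ∃ α β γ : ℝ, 0 ≤ α ∧ 0 ≤ β ∧ 0 ≤ γ ∧ α + β + γ ≤ 1 ∧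
      u = α + β / 4 ∧ v = α + γ / 2 := by
  rcases le_total v u with h | h
  · exact ⟨v, 4 * (u - v), 0, hv, by linarith, le_rfl, by linarith, by ring, by ring⟩
  · exact ⟨u, 0, 2 * (v - u), hu, le_rfl, by linarith, by linarith, by ring, by ring⟩

theorem convexHull_quadVertices_subset : convexHull ℝ quadVertices ⊆
    {p | 0 ≤ p 0 ∧ 0 ≤ p 1 ∧ 4 * p 0 - 3 * p 1 ≤ 1 ∧ 2 * p 1 - p 0 ≤ 1} := by
  refine convexHull_min ?_ fun x hx y hy a b ha hb hab => ?_
  · rintro p (rfl | rfl | rfl | rfl) <;> norm_num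
  · simp only [Set.mem_ofPred_eq, Pi.add_apply, Pi.smul_apply, smul_eq_mul] at *
    refine ⟨by nlinarith, by nlinarith, by nlinarith, by nlinarith⟩

theorem norm_le_of_abs_le {x : Fin 2 → ℝ} {ε : ℝ} (hε : 0 ≤ ε) (h₀ : |x 0| ≤ ε)
    (h₁ : |x 1| ≤ ε) : ‖x‖ ≤ ε :=
  (pi_norm_le_iff_of_nonneg hε).2 (Fin.forall_fin_two.2 ⟨h₀, h₁⟩)

theorem exists_mem_convexHull_near {N : ℕ} (hN : 1 ≤ N) {s : Fin 2 → ℝ}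
    (hs : s ∈ SN N 2 ![1, 2]) : ∃ h ∈ convexHull ℝ quadVertices, ‖s - h‖ ≤ 6 / N := by
  obtain ⟨A, hA, hs⟩ := hs
  have hN' : (0 : ℝ) < N := by exact_mod_cast hN
  have k₁ : 4 * (rZ A 1 : ℝ) ≤ 3 * rZ A 2 + N + 3 := by exact_mod_cast four_mul_rZ_one_le hA
  have k₂ : 2 * (rZ A 2 : ℝ) ≤ rZ A 1 + N + 1 := by exact_mod_cast two_mul_rZ_two_le hA
  -- the witness is `s` shrunk by the factor `N / (N + 3)`
  have close : ∀ r : ℕ, r ≤ N → |(r : ℝ) / N - r / (N + 3)| ≤ 6 / N := by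
    intro r hr
    have hr' : (r : ℝ) / N ≤ 1 := (div_le_one hN').2 (by exact_mod_cast hr)
    rw [show (r : ℝ) / N - r / (N + 3) = 3 * (r / N) / (N + 3) by field_simp; ring,
      abs_of_nonneg (by positivity), div_le_div_iff₀ (by positivity) hN']
    nlinarith
  obtain ⟨α, β, γ, hα, hβ, hγ, hsum, hu, hv⟩ := exists_combination_of_le
    (u := rZ A 1 / (N + 3)) (v := rZ A 2 / (N + 3)) (by positivity) (by positivity)
    (by rw [← mul_div_assoc, ← mul_div_assoc, div_sub_div_same, div_le_one (by positivity)]; linarith)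
    (by rw [← mul_div_assoc, div_sub_div_same, div_le_one (by positivity)]; linarith)
  refine ⟨_, combination_mem_convexHull hα hβ hγ hsum, norm_le_of_abs_le (by positivity) ?_ ?_⟩
  · simpa [hs 0, ← hu] using close _ (rZ_le_of_subset_Icc hA 1)
  · simpa [hs 1, ← hv] using close _ (rZ_le_of_subset_Icc hA 2)

theorem exists_mem_SN_near {N : ℕ} (hN : 1 ≤ N) {h : Fin 2 → ℝ}
    (hh : h ∈ convexHull ℝ quadVertices) : ∃ s ∈ SN N 2 ![1, 2], ‖s - h‖ ≤ 6 / N := by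
  obtain ⟨h₀, h₁, h₂, h₃⟩ := convexHull_quadVertices_subset hh
  obtain ⟨α, β, γ, hα, hβ, hγ, hsum, hu, hv⟩ := exists_combination_of_le h₀ h₁ h₂ h₃
  obtain ⟨A, hA, e₁, e₂⟩ := exists_rZ_near hN hα hβ hγ hsum
  have hN' : (0 : ℝ) < N := by exact_mod_cast hN
  have close : ∀ (r : ℕ) (w : ℝ), |(r : ℝ) - w * N| ≤ 6 → |(r : ℝ) / N - w| ≤ 6 / N := by
    intro r w hr
    rw [show (r : ℝ) / N - w = (r - w * N) / N by field_simp, abs_div, abs_of_pos hN']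
    gcongr
  refine ⟨_, ⟨A, hA, fun j => rfl⟩, norm_le_of_abs_le (by positivity) ?_ ?_⟩
  · simpa [hu] using close _ _ e₁
  · simpa [hv] using close _ _ e₂

theorem stmt5 :
    ∃ C : ℝ, 0 < C ∧ ∀ N : ℕ, 1 ≤ N →
      (∀ s ∈ SN N 2 ![1, 2],
        ∃ h ∈ convexHull ℝ
          ({![0, 0], ![1, 1], ![1 / 4, 0], ![0, 1 / 2]} : Set (Fin 2 → ℝ)),
          ‖s - h‖ ≤ C / N) ∧
      (∀ h ∈ convexHull ℝ
          ({![0, 0], ![1, 1], ![1 / 4, 0], ![0, 1 / 2]} : Set (Fin 2 → ℝ)),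
        ∃ s ∈ SN N 2 ![1, 2], ‖s - h‖ ≤ C / N) :=
  ⟨6, by norm_num, fun _ hN => ⟨fun _ => exists_mem_convexHull_near hN,
    fun _ => exists_mem_SN_near hN⟩⟩
end

section
/- Let ℓ ≥ 1 and n ≥ 1 be integers, let C ⊆ {1,2,…,ℓ}, and let B := {c + tℓ : c ∈ C, t ∈ {0,1,…,n−1}} ⊆ {1,2,…,nℓ}. Then for every integer j ≥ 1: | #{(b,b') ∈ B×B : b − b' = j} − n·#{(c,c') ∈ C×C : c ≡ c' + j (mod ℓ)} | ≤ j. -/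
/-!
Every element of `B` is uniquely `c + tℓ` with `c ∈ C`, `t < n`. The pairs with difference
`j` correspond to the `b ∈ B` with `b + j ∈ B`, whereas `n` times the residue count counts the
`b ∈ B` with `b + j` merely congruent to an element of `C`. For a `b` of the second kind but
not the first, `b + j` is congruent to some `c ∈ [1, ℓ]` yet lies outside `[1, nℓ]`, so
`b + j ∈ (nℓ, nℓ + j]`: there are at most `j` such `b`.
-/

open Finset

theorem Finset.card_filter_sub_eq_card_filter_add_mem {α : Type*} [AddCommGroup α]
    [DecidableEq α] (B : Finset α) (j : α) :
    ((B ×ˢ B).filter fun p => p.1 - p.2 = j).card = (B.filter fun b => b + j ∈ B).card := by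
  refine card_nbij' Prod.snd (fun b => (b + j, b)) ?_ ?_ ?_ ?_
  · rintro ⟨b, b'⟩ h
    simp only [coe_filter, mem_product, Set.mem_ofPred_eq] at h ⊢
    obtain ⟨⟨hb, hb'⟩, rfl⟩ := h
    simpa using And.intro hb' hb
  · intro b h
    simp only [coe_filter, mem_product, Set.mem_ofPred_eq] at h ⊢
    simp [h]
  · rintro ⟨b, b'⟩ h
    simp only [coe_filter, mem_product, Set.mem_ofPred_eq] at h
    simp [← h.2]
  · intro b _
    rfl

namespace Int

theorem eq_of_modEq_of_mem_Icc {l c c' : ℤ} (hc : c ∈ Icc 1 l) (hc' : c' ∈ Icc 1 l)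
    (h : c ≡ c' [ZMOD l]) : c = c' := by
  rw [mem_Icc] at hc hc'
  have := Int.eq_zero_of_abs_lt_dvd h.dvd (abs_lt.2 ⟨by omega, by omega⟩)
  omega

end Int

def periodicCopies (C : Finset ℤ) (l : ℤ) (n : ℕ) : Finset ℤ :=
  (C ×ˢ range n).image fun p => p.1 + (p.2 : ℤ) * l

section PeriodicCopies

variable {C : Finset ℤ} {l : ℤ} {n : ℕ}

theorem mem_periodicCopies {x : ℤ} :
    x ∈ periodicCopies C l n ↔ ∃ c ∈ C, ∃ t < n, c + (t : ℤ) * l = x := by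
  simp [periodicCopies, and_assoc]

theorem periodicCopies_subset_Icc (hC : C ⊆ Icc 1 l) :
    periodicCopies C l n ⊆ Icc 1 (n * l) := by
  intro x hx
  obtain ⟨c, hc, t, ht, rfl⟩ := mem_periodicCopies.1 hx
  have hcl := mem_Icc.1 (hC hc)
  have ht' : (t : ℤ) + 1 ≤ n := by exact_mod_cast ht
  rw [mem_Icc]
  constructor <;> nlinarith

theorem card_periodicCopies (hC : C ⊆ Icc 1 l) : (periodicCopies C l n).card = C.card * n := by
  rw [periodicCopies, card_image_of_injOn, card_product, card_range]
  rintro ⟨c, t⟩ h ⟨c', t'⟩ h' heq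
  simp only [coe_product, Set.mem_prod, mem_coe] at h h' heq
  have hcc : c = c' := Int.eq_of_modEq_of_mem_Icc (hC h.1) (hC h'.1) <|
    (Int.add_mul_emod_self_right c t l).symm.trans (heq ▸ Int.add_mul_emod_self_right c' t' l)
  subst hcc
  have hl : l ≠ 0 := by have := mem_Icc.1 (hC h.1); omega
  simpa [hl] using heq

theorem filter_periodicCopies (p : ℤ → Prop) [DecidablePred p]
    (hp : ∀ x (t : ℕ), p (x + t * l) ↔ p x) :
    (periodicCopies C l n).filter p = periodicCopies (C.filter p) l n := by
  simp only [periodicCopies, filter_image, hp, filter_product_left]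

theorem mem_periodicCopies_of_modEq (hC : C ⊆ Icc 1 l) {c x : ℤ} (hc : c ∈ C)
    (hx : x ≡ c [ZMOD l]) (hx1 : 1 ≤ x) (hxn : x ≤ n * l) : x ∈ periodicCopies C l n := by
  obtain ⟨t, ht⟩ := hx.symm.dvd
  have hcl := mem_Icc.1 (hC hc)
  have ht0 : 0 ≤ t := by nlinarith
  have htn : t < n := by nlinarith
  rw [mem_periodicCopies]
  exact ⟨c, hc, t.toNat, by omega, by rw [Int.toNat_of_nonneg ht0]; linarith⟩

theorem card_filter_product_modEq_add (hC : C ⊆ Icc 1 l) (j : ℤ) :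
    ((C ×ˢ C).filter fun p => p.1 ≡ p.2 + j [ZMOD l]).card =
      (C.filter fun c' => ∃ c ∈ C, c ≡ c' + j [ZMOD l]).card := by
  refine card_nbij Prod.snd ?_ ?_ ?_
  · rintro ⟨c, c'⟩ h
    simp only [coe_filter, mem_product, Set.mem_ofPred_eq] at h ⊢
    exact ⟨h.1.2, c, h.1.1, h.2⟩
  · rintro ⟨c₁, c'⟩ h₁ ⟨c₂, _⟩ h₂ (rfl : c' = _)
    simp only [coe_filter, mem_product, Set.mem_ofPred_eq] at h₁ h₂
    rw [Int.eq_of_modEq_of_mem_Icc (hC h₁.1.1) (hC h₂.1.1) (h₁.2.trans h₂.2.symm)]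
  · intro c' h
    simp only [coe_filter, Set.mem_ofPred_eq] at h
    obtain ⟨hc', c, hc, hcc'⟩ := h
    exact ⟨(c, c'), by simp [hc, hc', hcc'], rfl⟩

theorem card_filter_periodicCopies_modEq (hC : C ⊆ Icc 1 l) (j : ℤ) :
    ((periodicCopies C l n).filter fun b => ∃ c ∈ C, c ≡ b + j [ZMOD l]).card =
      n * (C.filter fun c' => ∃ c ∈ C, c ≡ c' + j [ZMOD l]).card := by
  have hper (x : ℤ) (t : ℕ) : (x + t * l + j) % l = (x + j) % l := by
    rw [add_right_comm, Int.add_mul_emod_self_right]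
  rw [filter_periodicCopies _ fun x t => by simp only [Int.ModEq, hper],
    card_periodicCopies (filter_subset _ _ |>.trans hC), mul_comm]

theorem filter_add_mem_subset_filter_modEq (j : ℤ) :
    (periodicCopies C l n).filter (fun b => b + j ∈ periodicCopies C l n) ⊆
      (periodicCopies C l n).filter fun b => ∃ c ∈ C, c ≡ b + j [ZMOD l] := by
  refine monotone_filter_right _ fun b _ hb => ?_
  obtain ⟨c, hc, t, _, hct⟩ := mem_periodicCopies.1 hb
  exact ⟨c, hc, Int.modEq_iff_dvd.2 ⟨t, by rw [← hct]; ring⟩⟩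

theorem card_filter_modEq_sdiff_filter_add_mem_le (hC : C ⊆ Icc 1 l) {j : ℤ} (hj : 0 ≤ j) :
    ((((periodicCopies C l n).filter fun b => ∃ c ∈ C, c ≡ b + j [ZMOD l]) \
      (periodicCopies C l n).filter fun b => b + j ∈ periodicCopies C l n).card : ℤ) ≤ j := by
  calc _ ≤ ((Ioc (n * l) (n * l + j)).card : ℤ) :=
        Nat.cast_le.2 <| card_le_card_of_injOn (· + j) ?_ fun _ _ _ _ => add_right_cancel
    _ = j := by rw [Int.card_Ioc_of_le _ _ (by omega)]; ring
  intro b hb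
  simp only [coe_sdiff, coe_filter, Set.mem_sdiff, Set.mem_ofPred_eq, not_and] at hb
  obtain ⟨⟨hbB, c, hc, hcb⟩, hbj⟩ := hb
  have hb := mem_Icc.1 (periodicCopies_subset_Icc hC hbB)
  have hlt : ¬ b + j ≤ n * l := fun h =>
    hbj hbB (mem_periodicCopies_of_modEq hC hc hcb.symm (by omega) h)
  simp only [coe_Ioc, Set.mem_Ioc]
  omega

end PeriodicCopies

theorem stmt11_general (l n : ℕ) (C : Finset ℤ)
    (hC : C ⊆ Finset.Icc 1 (l : ℤ)) (B : Finset ℤ)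
    (hB : B = (C ×ˢ Finset.range n).image (fun p => p.1 + (p.2 : ℤ) * (l : ℤ)))
    (j : ℤ) (hj : 1 ≤ j) :
    |(((B ×ˢ B).filter (fun p => p.1 - p.2 = j)).card : ℤ)
        - (n : ℤ) * (((C ×ˢ C).filter
            (fun p => p.1 % (l : ℤ) = (p.2 + j) % (l : ℤ))).card : ℤ)| ≤ j := by
  change B = periodicCopies C l n at hB
  subst hB
  simp only [← Int.ModEq.eq_1]
  rw [card_filter_sub_eq_card_filter_add_mem, card_filter_product_modEq_add hC, ← Nat.cast_mul,
    ← card_filter_periodicCopies_modEq hC,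
    ← card_sdiff_add_card_eq_card (filter_add_mem_subset_filter_modEq j)]
  push_cast
  rw [abs_sub_comm, add_sub_cancel_right, abs_of_nonneg (by positivity)]
  exact card_filter_modEq_sdiff_filter_add_mem_le hC (by omega)

theorem stmt11 (l n : ℕ) (hl : 1 ≤ l) (hn : 1 ≤ n) (C : Finset ℤ)
    (hC : C ⊆ Finset.Icc 1 (l : ℤ)) (B : Finset ℤ)
    (hB : B = (C ×ˢ Finset.range n).image (fun p => p.1 + (p.2 : ℤ) * (l : ℤ)))
    (j : ℤ) (hj : 1 ≤ j) :
    |(((B ×ˢ B).filter (fun p => p.1 - p.2 = j)).card : ℤ)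
        - (n : ℤ) * (((C ×ˢ C).filter
            (fun p => p.1 % (l : ℤ) = (p.2 + j) % (l : ℤ))).card : ℤ)| ≤ j :=
  stmt11_general l n C hC B hB j hj
end
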